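/- Let X be a connected G-graph, H ≤ G, E a connected subset of V(H\X) with connected complement, and Ē = {v ∈ VX : Hv ∈ E}. If C is a component of Ē then for every h ∈ H, either hC = C or hC ∩ C = ∅; moreover HC = Ē, and H\δC = δE. -/

import Mathlib

open Set

variable {G V : Type*} [Group G] [MulAction G V]

def cobound {W : Type*} (X : SimpleGraph W) (A : Set W) : Set (Sym2 W) :=
  {e | e ∈ X.edgeSet ∧ ∃ u v, e = s(u, v) ∧ u ∈ A ∧ v ∉ A}

/-- The quotient graph `H\X` of a `G`-graph by the action of a subgroup `H`. -/
def quotGraph (X : SimpleGraph V) (H : Subgroup G) :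
    SimpleGraph (Quotient (MulAction.orbitRel H V)) where
  Adj q q' := q ≠ q' ∧ ∃ u v : V,
    Quotient.mk (MulAction.orbitRel H V) u = q ∧
    Quotient.mk (MulAction.orbitRel H V) v = q' ∧ X.Adj u v
  symm := ⟨by
    rintro q q' ⟨h, u, v, hu, hv, ha⟩
    exact ⟨h.symm, v, u, hv, hu, ha.symm⟩⟩
  loopless := ⟨fun q h => h.1 rfl⟩

/-- `C` is a component of `Ē`: a maximal connected subset of `Ē`. -/
def IsCompOf (X : SimpleGraph V) (C Ebar : Set V) : Prop :=
  C.Nonempty ∧ C ⊆ Ebar ∧ (X.induce C).Connected ∧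
    ∀ D : Set V, C ⊆ D → D ⊆ Ebar → (X.induce D).Connected → D = C

lemma mem_comp_of_adj {W : Type*} (X : SimpleGraph W) {C Ebar : Set W}
    (hC : IsCompOf X C Ebar) {u v : W} (hu : u ∈ C) (hv : v ∈ Ebar) (ha : X.Adj u v) :
    v ∈ C := by
  obtain ⟨hCne, hCsub, hCconn, hCmax⟩ := hC
  have h2 := SimpleGraph.induce_pair_connected_of_adj ha
  have hcup : (X.induce (C ∪ {u, v})).Connected :=
    SimpleGraph.induce_union_connected hCconn.preconnected h2.preconnected ⟨u, hu, by simp⟩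
  have hD := hCmax (C ∪ {u, v}) Set.subset_union_left
    (Set.union_subset hCsub (by
      intro x hx
      rcases Set.mem_insert_iff.mp hx with rfl | hx
      · exact hCsub hu
      · rw [Set.mem_singleton_iff.mp hx]; exact hv)) hcup
  rw [← hD]
  exact Or.inr (by simp)

lemma smul_induce_connected (X : SimpleGraph V)
    (hact : ∀ g : G, ∀ u v : V, X.Adj u v ↔ X.Adj (g • u) (g • v)) (g : G) {C : Set V}
    (hconn : (X.induce C).Connected) : (X.induce ((fun v => g • v) '' C)).Connected := by
  let f : X.induce C →g X.induce ((fun v => g • v) '' C) :=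
    { toFun := fun c => ⟨g • c.1, ⟨c.1, c.2, rfl⟩⟩,
      map_rel' := fun {a b} hab => (hact g a.1 b.1).mp hab }
  exact hconn.map f (by rintro ⟨w, c, hc, rfl⟩; exact ⟨⟨c, hc⟩, rfl⟩)

/-- if `E ⊆ V(H\X)` is connected with connected complement, `Ē` is its full
preimage in `VX`, and `C` is a component of `Ē`, then every `h ∈ H` maps `C` to itself or
off itself, `HC = Ē`, and `H\δC = δE`. -/
theorem component_of_preimage (X : SimpleGraph V)
    (hact : ∀ g : G, ∀ u v : V, X.Adj u v ↔ X.Adj (g • u) (g • v))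
    (hconn : X.Connected) (H : Subgroup G)
    (E : Set (Quotient (MulAction.orbitRel H V)))
    (hE : ((quotGraph X H).induce E).Connected)
    (hEc : ((quotGraph X H).induce Eᶜ).Connected)
    (Ebar : Set V)
    (hEbar : Ebar = {v : V | Quotient.mk (MulAction.orbitRel H V) v ∈ E})
    (C : Set V) (hC : IsCompOf X C Ebar) :
    (∀ h : H, (fun v : V => (h : G) • v) '' C = C ∨
      ((fun v : V => (h : G) • v) '' C) ∩ C = ∅) ∧
    (⋃ h : H, (fun v : V => (h : G) • v) '' C) = Ebar ∧
    Sym2.map (fun v : V => Quotient.mk (MulAction.orbitRel H V) v) '' cobound X C =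
      cobound (quotGraph X H) E := by
  obtain ⟨hCne, hCsub, hCconn, hCmax⟩ := hC
  have hmem : ∀ v : V, v ∈ Ebar ↔ Quotient.mk (MulAction.orbitRel H V) v ∈ E := by
    simp [hEbar]
  have hqsmul : ∀ (h : H) (v : V),
      Quotient.mk (MulAction.orbitRel H V) ((h : G) • v) =
        Quotient.mk (MulAction.orbitRel H V) v :=
    fun h v => Quotient.sound ⟨h, rfl⟩
  -- translates of C sit inside Ebar
  have himgE : ∀ h : H, (fun v : V => (h : G) • v) '' C ⊆ Ebar := by
    rintro h _ ⟨c, hc, rfl⟩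
    rw [hmem, hqsmul]
    exact (hmem c).mp (hCsub hc)
  -- key: a translate meeting C is contained in C
  have key : ∀ h : H, (((fun v : V => (h : G) • v) '' C) ∩ C).Nonempty →
      (fun v : V => (h : G) • v) '' C ⊆ C := by
    intro h hne
    have himg := smul_induce_connected X hact ((h : G)) hCconn
    have hU := SimpleGraph.induce_union_connected hCconn.preconnected himg.preconnected
      (by obtain ⟨x, hx1, hx2⟩ := hne; exact ⟨x, hx2, hx1⟩)
    have hD := hCmax (C ∪ _) Set.subset_union_left (Set.union_subset hCsub (himgE h)) hU
    intro x hx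
    have hx' : x ∈ C ∪ (fun v : V => (h : G) • v) '' C := Or.inr hx
    rwa [hD] at hx'
  have part1 : ∀ h : H, (fun v : V => (h : G) • v) '' C = C ∨
      ((fun v : V => (h : G) • v) '' C) ∩ C = ∅ := by
    intro h
    rcases Set.eq_empty_or_nonempty (((fun v : V => (h : G) • v) '' C) ∩ C) with he | hne
    · exact Or.inr he
    · left
      refine Set.Subset.antisymm (key h hne) ?_
      obtain ⟨x, ⟨c, hc, hxc⟩, hxC⟩ := hne
      have hne' : (((fun v : V => ((h⁻¹ : H) : G) • v) '' C) ∩ C).Nonempty := by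
        refine ⟨((h⁻¹ : H) : G) • x, ⟨x, hxC, rfl⟩, ?_⟩
        have : ((h⁻¹ : H) : G) • x = c := by
          rw [← hxc]; simp
        rw [this]; exact hc
      have hsub := key h⁻¹ hne'
      intro c' hc'
      have : ((h⁻¹ : H) : G) • c' ∈ C := hsub ⟨c', hc', rfl⟩
      exact ⟨_, this, by simp⟩
  -- the image of C in the quotient is all of E
  have himage : ∀ e ∈ E, ∃ c ∈ C, Quotient.mk (MulAction.orbitRel H V) c = e := by
    have aux : ∀ (a b : E), ((quotGraph X H).induce E).Walk a b →
        (∃ c ∈ C, Quotient.mk (MulAction.orbitRel H V) c = a.1) →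
        ∃ c ∈ C, Quotient.mk (MulAction.orbitRel H V) c = b.1 := by
      intro a b w
      induction w with
      | nil => exact id
      | @cons a b' b hadj p ih =>
        rintro ⟨c, hc, hqc⟩
        apply ih
        obtain ⟨hne, u, v, hqu, hqv, huv⟩ := hadj
        have hq : Quotient.mk (MulAction.orbitRel H V) u =
            Quotient.mk (MulAction.orbitRel H V) c := hqu.trans hqc.symm
        obtain ⟨k, hk⟩ := Quotient.exact hq
        -- hk : k • c = u
        have hk' : ((k⁻¹ : H) : G) • u = c := by
          rw [← hk]; simp [Subgroup.smul_def, smul_smul]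
        have hadj' : X.Adj c (((k⁻¹ : H) : G) • v) := by
          rw [← hk']; exact (hact _ u v).mp huv
        have hvE : ((k⁻¹ : H) : G) • v ∈ Ebar := by
          rw [hmem, hqsmul, hqv]; exact b'.2
        refine ⟨_, mem_comp_of_adj X ⟨hCne, hCsub, hCconn, hCmax⟩ hc hvE hadj', ?_⟩
        rw [hqsmul]; exact hqv
    intro e he
    obtain ⟨c0, hc0⟩ := hCne
    have hc0E : Quotient.mk (MulAction.orbitRel H V) c0 ∈ E := (hmem c0).mp (hCsub hc0)
    obtain ⟨w⟩ := hE.preconnected ⟨_, hc0E⟩ ⟨e, he⟩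
    exact aux _ _ w ⟨c0, hc0, rfl⟩
  have part2 : (⋃ h : H, (fun v : V => (h : G) • v) '' C) = Ebar := by
    apply Set.Subset.antisymm
    · exact Set.iUnion_subset himgE
    · intro v hv
      obtain ⟨c, hc, hqc⟩ := himage _ ((hmem v).mp hv)
      obtain ⟨k, hk⟩ := Quotient.exact hqc
      -- hk : k • v = c
      rw [Set.mem_iUnion]
      refine ⟨k⁻¹, c, hc, ?_⟩
      rw [← hk]; simp [Subgroup.smul_def, smul_smul]
  refine ⟨part1, part2, ?_⟩
  ext e
  constructor
  · rintro ⟨e', ⟨hedge, u, v, rfl, huC, hvC⟩, rfl⟩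
    have hadj : X.Adj u v := hedge
    have hvE : v ∉ Ebar := fun hvE =>
      hvC (mem_comp_of_adj X ⟨hCne, hCsub, hCconn, hCmax⟩ huC hvE hadj)
    have huE : Quotient.mk (MulAction.orbitRel H V) u ∈ E := (hmem u).mp (hCsub huC)
    have hvE' : Quotient.mk (MulAction.orbitRel H V) v ∉ E := fun h => hvE ((hmem v).mpr h)
    have hne : Quotient.mk (MulAction.orbitRel H V) u ≠
        Quotient.mk (MulAction.orbitRel H V) v := fun h => hvE' (h ▸ huE)
    refine ⟨?_, _, _, Sym2.map_pair_eq _ _ _, huE, hvE'⟩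
    exact (SimpleGraph.mem_edgeSet _).mpr ⟨hne, u, v, rfl, rfl, hadj⟩
  · rintro ⟨hedge, a, b, rfl, haE, hbE⟩
    have hadj : (quotGraph X H).Adj a b := hedge
    obtain ⟨hne, u, v, hqu, hqv, huv⟩ := hadj
    obtain ⟨c, hc, hqc⟩ := himage a haE
    have hq : Quotient.mk (MulAction.orbitRel H V) u =
        Quotient.mk (MulAction.orbitRel H V) c := by rw [hqu, hqc]
    obtain ⟨k, hk⟩ := Quotient.exact hq
    have hk' : ((k⁻¹ : H) : G) • u = c := by
      rw [← hk]; simp [Subgroup.smul_def, smul_smul]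
    have hadj' : X.Adj c (((k⁻¹ : H) : G) • v) := by
      rw [← hk']; exact (hact _ u v).mp huv
    have hvC : ((k⁻¹ : H) : G) • v ∉ C := by
      intro hmemC
      have : ((k⁻¹ : H) : G) • v ∈ Ebar := hCsub hmemC
      rw [hmem, hqsmul, hqv] at this
      exact hbE this
    refine ⟨s(c, ((k⁻¹ : H) : G) • v), ⟨(SimpleGraph.mem_edgeSet _).mpr hadj', c, _, rfl, hc, hvC⟩, ?_⟩
    rw [Sym2.map_pair_eq, hqc, hqsmul, hqv]
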